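/- (Lemma II) For any standard sentence s in the language of T: if T proves ¬s and T proves ∃n Proof_T(n, ⁰⌜s⌝), then T proves remote(⁰⌜s⌝). In other words, if T refutes a standard sentence yet proves the existence of an internal proof of that sentence, then T proves that sentence is remote. -/

import Mathlib

open FirstOrder FirstOrder.Language

namespace GodelStalk

/-- Function symbols of the first-order language of arithmetic:
zero, successor, addition, multiplication. -/
inductive ArithFunc : ℕ → Type
  | zero : ArithFunc 0
  | succ : ArithFunc 1
  | add : ArithFunc 2
  | mul : ArithFunc 2

/-- Relation symbols of the first-order language of arithmetic: `≤`. -/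
inductive ArithRel : ℕ → Type
  | le : ArithRel 2

/-- The first-order language of arithmetic. -/
def Larith : FirstOrder.Language := ⟨ArithFunc, ArithRel⟩

/-- The numeral `⁰n`: `n`-many repeated applications of the successor symbol to zero. -/
def num {α : Type} : ℕ → Larith.Term α
  | 0 => Term.func ArithFunc.zero ![]
  | n + 1 => Term.func ArithFunc.succ ![num n]

/-- Successor term. -/
def succT {α : Type} (t : Larith.Term α) : Larith.Term α :=
  Term.func ArithFunc.succ ![t]

/-- Addition term. -/
def addT {α : Type} (t u : Larith.Term α) : Larith.Term α :=
  Term.func ArithFunc.add ![t, u]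

/-- Multiplication term. -/
def mulT {α : Type} (t u : Larith.Term α) : Larith.Term α :=
  Term.func ArithFunc.mul ![t, u]

/-- The formula `t ≤ u`. -/
def leF {α : Type} (t u : Larith.Term α) : Larith.Formula α :=
  Relations.formula₂ ArithRel.le t u

/-- The formula `t < u`, rendered as `S t ≤ u`. -/
def ltF {α : Type} (t u : Larith.Term α) : Larith.Formula α :=
  leF (succT t) u

/-- Universal quantification over one extra variable. -/
noncomputable def all1 {α : Type} (φ : Larith.Formula (α ⊕ Fin 1)) : Larith.Formula α :=
  Formula.iAlls (Fin 1) φ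

/-- Existential quantification over one extra variable. -/
noncomputable def ex1 {α : Type} (φ : Larith.Formula (α ⊕ Fin 1)) : Larith.Formula α :=
  Formula.iExs (Fin 1) φ

/-- Substitute a term for the unique free variable of a formula. -/
def app1 {α : Type} (φ : Larith.Formula (Fin 1)) (t : Larith.Term α) : Larith.Formula α :=
  φ.subst fun _ => t

/-- Substitute two terms for the two free variables of a formula. -/
def app2 {α : Type} (φ : Larith.Formula (Fin 2)) (t u : Larith.Term α) : Larith.Formula α :=
  φ.subst ![t, u]

/-- Substitute a term for the distinguished (`Sum.inr`) free variable of a formula. -/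
def substLast {α : Type} (φ : Larith.Formula (α ⊕ Fin 1)) (t : Larith.Term α) :
    Larith.Formula α :=
  φ.subst (Sum.elim Term.var fun _ => t)

/-- `isMinOf φ t` expresses `t = min z : φ(z)`, i.e. `φ(t) ∧ ∀ w < t, ¬φ(w)`. -/
noncomputable def isMinOf {α : Type} (φ : Larith.Formula (α ⊕ Fin 1)) (t : Larith.Term α) :
    Larith.Formula α :=
  substLast φ t ⊓ all1 (ltF (Term.var (Sum.inr 0)) (t.relabel Sum.inl) ⟹ ∼φ)

/-- `minProofOf pf c t` expresses `t = min z : pf(z, c)`. -/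
noncomputable def minProofOf {α : Type} (pf : Larith.Formula (Fin 2)) (c t : Larith.Term α) :
    Larith.Formula α :=
  isMinOf (app2 pf (Term.var (Sum.inr 0)) (c.relabel Sum.inl)) t

/-- Provability within the theory `T` (semantic consequence, which by the Gödel
completeness theorem coincides with first-order provability). -/
def Proves (T : Larith.Theory) (φ : Larith.Sentence) : Prop :=
  T ⊨ᵇ φ

/-- `T` is consistent. -/
def Consistent (T : Larith.Theory) : Prop :=
  ¬ Proves T ⊥

/-- `T` is complete: it decides every sentence. -/
def Complete (T : Larith.Theory) : Prop :=
  ∀ φ : Larith.Sentence, Proves T φ ∨ Proves T (∼φ)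

/-- Universal closure over `Fin k`-many free variables. -/
noncomputable def closure {k : ℕ} (φ : Larith.Formula (Fin k)) : Larith.Sentence :=
  Formula.iAlls (Fin k) (φ.relabel Sum.inr)

/-- The axioms of Robinson arithmetic `Q` (with `≤` defined from addition). -/
noncomputable def QTheory : Larith.Theory :=
  { closure (∼(Term.equal (succT (Term.var (0 : Fin 1))) (num 0))),
    closure (Term.equal (succT (Term.var (0 : Fin 2))) (succT (Term.var 1)) ⟹
      Term.equal (Term.var 0) (Term.var (1 : Fin 2))),
    closure (∼(Term.equal (Term.var (0 : Fin 1)) (num 0)) ⟹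
      ex1 (Term.equal (Term.var (Sum.inl 0)) (succT (Term.var (Sum.inr (0 : Fin 1)))) :
        Larith.Formula (Fin 1 ⊕ Fin 1))),
    closure (Term.equal (addT (Term.var (0 : Fin 1)) (num 0)) (Term.var 0)),
    closure (Term.equal (addT (Term.var (0 : Fin 2)) (succT (Term.var 1)))
      (succT (addT (Term.var 0) (Term.var (1 : Fin 2))))),
    closure (Term.equal (mulT (Term.var (0 : Fin 1)) (num 0)) (num 0)),
    closure (Term.equal (mulT (Term.var (0 : Fin 2)) (succT (Term.var 1)))
      (addT (mulT (Term.var 0) (Term.var 1)) (Term.var (0 : Fin 2)))),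
    closure ((leF (Term.var (0 : Fin 2)) (Term.var 1)) ⇔
      ex1 (Term.equal (addT (Term.var (Sum.inr (0 : Fin 1))) (Term.var (Sum.inl 0)))
        (Term.var (Sum.inl (1 : Fin 2))))) }

/-- The induction axiom for a formula `φ` with parameters `Fin k` and induction
variable the distinguished `Sum.inr` variable. -/
noncomputable def inductionSentence {k : ℕ} (φ : Larith.Formula (Fin k ⊕ Fin 1)) :
    Larith.Sentence :=
  closure ((substLast φ (num 0) ⊓
      all1 (φ ⟹ φ.subst (Sum.elim (Term.var ∘ Sum.inl)
        fun _ => succT (Term.var (Sum.inr 0))))) ⟹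
    all1 φ)

/-- Peano Arithmetic: Robinson arithmetic together with the induction scheme. -/
noncomputable def PATheory : Larith.Theory :=
  QTheory ∪ { σ | ∃ (k : ℕ) (φ : Larith.Formula (Fin k ⊕ Fin 1)), σ = inductionSentence φ }


/-! ### The extension `E_s(v)`, `remote`, and `𝔎` (minimality version) -/

/-- `extFormulaAt pf c t` is the extension formula `E_s` of the sentence `s` with
Gödel code `c`, evaluated at the term `t`:
`∀x ∀y (Proof_T(x, t) ∧ [y = min z : Proof_T(z, ⁰c)] → x ≥ y)`. -/
noncomputable def extFormulaAt {α : Type} (pf : Larith.Formula (Fin 2)) (c : ℕ)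
    (t : Larith.Term α) : Larith.Formula α :=
  Formula.iAlls (Fin 2)
    ((app2 pf (Term.var (Sum.inr 0)) (t.relabel Sum.inl) ⊓
        minProofOf pf (num c) (Term.var (Sum.inr 1))) ⟹
      leF (Term.var (Sum.inr 1)) (Term.var (Sum.inr 0)))

/-- The extension `E_s(v)` of the sentence `s` with Gödel code `c`, as a formula
in the single free variable `v`. -/
noncomputable def extFormula (pf : Larith.Formula (Fin 2)) (c : ℕ) :
    Larith.Formula (Fin 1) :=
  extFormulaAt pf c (Term.var 0)

/-- `remoteAt pf dgn t` is the formula `remote(t)`: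
`∃x ∃k ∃z (Dgn(x, t) ∧ k = min n : Proof_T(n, t) ∧ z = min m : Proof_T(m, x) ∧ z < k)`. -/
noncomputable def remoteAt {α : Type} (pf dgn : Larith.Formula (Fin 2))
    (t : Larith.Term α) : Larith.Formula α :=
  Formula.iExs (Fin 3)
    (app2 dgn (Term.var (Sum.inr 0)) (t.relabel Sum.inl) ⊓
      minProofOf pf (t.relabel Sum.inl) (Term.var (Sum.inr 1)) ⊓
      minProofOf pf (Term.var (Sum.inr 0)) (Term.var (Sum.inr 2)) ⊓
      ltF (Term.var (Sum.inr 2)) (Term.var (Sum.inr 1)))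

/-- `∃y (remote(y) ∧ Proof_T(t, y))` : `t` is (the code of) a proof of a remote sentence. -/
noncomputable def provesRemoteAt {α : Type} (pf dgn : Larith.Formula (Fin 2))
    (t : Larith.Term α) : Larith.Formula α :=
  ex1 (remoteAt pf dgn (Term.var (Sum.inr 0)) ⊓
    app2 pf (t.relabel Sum.inl) (Term.var (Sum.inr 0)))

/-- `isKAt pf dgn t` is the defining condition `t = 𝔎`, that is,
`t = min k : ∃y (remote(y) ∧ Proof_T(k, y))`. -/
noncomputable def isKAt {α : Type} (pf dgn : Larith.Formula (Fin 2))
    (t : Larith.Term α) : Larith.Formula α :=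
  isMinOf (provesRemoteAt pf dgn (Term.var (Sum.inr 0))) t

/-- `geqKAt pf dgn t` expresses `t ≥ 𝔎`: `∀w (w = 𝔎 → w ≤ t)`. -/
noncomputable def geqKAt {α : Type} (pf dgn : Larith.Formula (Fin 2))
    (t : Larith.Term α) : Larith.Formula α :=
  all1 (isKAt pf dgn (Term.var (Sum.inr 0)) ⟹
    leF (Term.var (Sum.inr 0)) (t.relabel Sum.inl))

/-- A bundle of the standard arithmetization data for the recursively axiomatized
theory `T`: Gödel's arithmetized proof predicate `ProofF` (i.e. `Proof_T`), a Gödel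
coding `code` of sentences, Rosser's arithmetized negation function `negfn`, and the
syntactic diagonalization operator `diag` (satisfying the diagonal lemma). -/
structure GodelSetting (T : Larith.Theory) : Type where
  /-- Gödel's arithmetized provability predicate `Proof_T(x, y)`. -/
  ProofF : Larith.Formula (Fin 2)
  /-- The arithmetical formula `Dgn(x, y)`. -/
  DgnF : Larith.Formula (Fin 2)
  /-- Gödel coding of sentences. -/
  code : Larith.Sentence → ℕ
  /-- Rosser's arithmetized negation function. -/
  negfn : ℕ → ℕ
  /-- The syntactic diagonalization `φ(v) ↦ D(φ(v))`. -/
  diag : Larith.Formula (Fin 1) → Larith.Sentence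
  /-- The diagonal lemma: `T ⊢ D(φ) ↔ φ(⁰⌜D(φ)⌝)`. -/
  diag_spec : ∀ φ : Larith.Formula (Fin 1),
    Proves T (diag φ ⇔ app1 φ (num (code (diag φ))))
  /-- If `T ⊢ s` then some standard natural number codes a proof of `s`. -/
  proof_complete : ∀ s : Larith.Sentence, Proves T s →
    ∃ n : ℕ, Proves T (app2 ProofF (num n) (num (code s)))
  /-- Conversely, a standardly coded internal proof of `s` yields `T ⊢ s`. -/
  proof_sound : ∀ (s : Larith.Sentence) (n : ℕ),
    Proves T (app2 ProofF (num n) (num (code s))) → Proves T s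
  /-- `Proof_T` is a decidable (Δ₁) predicate on standard naturals. -/
  proof_decide : ∀ n m : ℕ,
    Proves T (app2 ProofF (num n) (num m)) ∨ Proves T (∼(app2 ProofF (num n) (num m)))
  /-- `negfn` sends the code of a sentence to the code of its negation. -/
  negfn_spec : ∀ s : Larith.Sentence, negfn (code s) = code (∼s)

/-- The formula `Dgn(x, y)` represents in `T` the computable map sending the Gödel
code of a sentence `s` to the Gödel code of the diagonal sentence `D(E_s(v))` of
its extension: `T ⊢ Dgn(⁰⌜D(E_s(v))⌝, ⁰⌜s⌝)` and
`T ⊢ ∀x (Dgn(x, ⁰⌜s⌝) → x = ⁰⌜D(E_s(v))⌝)`. -/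
def DgnRepresents (T : Larith.Theory) (G : GodelSetting T) : Prop :=
  (∀ s : Larith.Sentence,
    Proves T (app2 G.DgnF (num (G.code (G.diag (extFormula G.ProofF (G.code s)))))
      (num (G.code s)))) ∧
  (∀ s : Larith.Sentence,
    Proves T (all1 (app2 G.DgnF (Term.var (Sum.inr 0)) (num (G.code s)) ⟹
      Term.equal (Term.var (Sum.inr 0))
        (num (G.code (G.diag (extFormula G.ProofF (G.code s))))))))

/-! Since `Proves` is semantic consequence, argue in an arbitrary model `M` of `T`. As `T` is
consistent and refutes `s`, no standard number proves `s` there, so the least proof `k` of `s`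
(which exists by `hproof` and the least number principle) lies above every numeral. Let
`d = D(E_s(v))`. If `T ⊢ d`, then `d` has a standard proof, so its least proof `z` is below `k`.
If `T ⊢ ¬d`, the diagonal lemma gives `¬E_s(⁰⌜d⌝)` in `M`: some proof of `d` lies strictly below
the least proof of `s`, and again `z < k`. Since `Dgn(⁰⌜d⌝, ⁰⌜s⌝)` holds, the triple `(⌜d⌝, k, z)`
witnesses `remote(⁰⌜s⌝)`. -/

open FirstOrder.Language.Structure

lemma Fin.cons_finZeroElim {β : Type*} (a : β) :
    (Fin.cons a finZeroElim : Fin 1 → β) = fun _ => a :=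
  Matrix.cons_fin_one a _

section Realize

variable {M : Type} [Larith.Structure M]

def zeroM : M := funMap (L := Larith) ArithFunc.zero ![]

def succM (a : M) : M := funMap (L := Larith) ArithFunc.succ ![a]

def addM (a b : M) : M := funMap (L := Larith) ArithFunc.add ![a, b]

def leM (a b : M) : Prop := RelMap (L := Larith) ArithRel.le ![a, b]

def numM : ℕ → M
  | 0 => zeroM
  | n + 1 => succM (numM n)

@[simp] lemma realize_num {α : Type} (v : α → M) (n : ℕ) :
    (num n : Larith.Term α).realize v = numM n := by
  induction n with
  | zero => simp only [num, numM, Term.realize, zeroM]; congr; funext i; exact i.elim0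
  | succ n ih =>
    simp only [num, numM, Term.realize, succM]
    congr
    funext i
    fin_cases i
    simpa using ih

@[simp] lemma realize_succT {α : Type} (v : α → M) (t : Larith.Term α) :
    (succT t).realize v = succM (t.realize v) := by
  simp only [succT, Term.realize, succM]
  congr; funext i; fin_cases i; simp

@[simp] lemma realize_addT {α : Type} (v : α → M) (t u : Larith.Term α) :
    (addT t u).realize v = addM (t.realize v) (u.realize v) := by
  simp only [addT, Term.realize, addM]
  congr; funext i; fin_cases i <;> simp

@[simp] lemma realize_leF {α : Type} (v : α → M) (t u : Larith.Term α) :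
    (leF t u).Realize v ↔ leM (t.realize v) (u.realize v) :=
  Formula.realize_rel₂

@[simp] lemma realize_ltF {α : Type} (v : α → M) (t u : Larith.Term α) :
    (ltF t u).Realize v ↔ leM (succM (t.realize v)) (u.realize v) := by
  simp [ltF]

lemma realize_closure {k : ℕ} (φ : Larith.Formula (Fin k)) :
    M ⊨ closure φ ↔ ∀ p : Fin k → M, φ.Realize p := by
  simp only [closure, Sentence.Realize, Formula.realize_iAlls, Formula.realize_relabel]
  rfl

@[simp] lemma realize_all1 {α : Type} (v : α → M) (φ : Larith.Formula (α ⊕ Fin 1)) :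
    (all1 φ).Realize v ↔ ∀ a : M, φ.Realize (Sum.elim v fun _ => a) := by
  simp only [all1, Formula.realize_iAlls, Fin.forall_fin_succ_pi, Fin.forall_fin_zero_pi,
    Fin.cons_finZeroElim]

@[simp] lemma realize_ex1 {α : Type} (v : α → M) (φ : Larith.Formula (α ⊕ Fin 1)) :
    (ex1 φ).Realize v ↔ ∃ a : M, φ.Realize (Sum.elim v fun _ => a) := by
  simp only [ex1, Formula.realize_iExs, Fin.exists_fin_succ_pi, Fin.exists_fin_zero_pi,
    Fin.cons_finZeroElim]

@[simp] lemma realize_app1 {α : Type} (v : α → M) (φ : Larith.Formula (Fin 1))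
    (t : Larith.Term α) :
    (app1 φ t).Realize v ↔ φ.Realize (fun _ : Fin 1 => t.realize v) := by
  simp only [app1, Formula.Realize, BoundedFormula.realize_subst]

@[simp] lemma realize_app2 {α : Type} (v : α → M) (φ : Larith.Formula (Fin 2))
    (t u : Larith.Term α) :
    (app2 φ t u).Realize v ↔ φ.Realize ![t.realize v, u.realize v] := by
  simp only [app2, Formula.Realize, BoundedFormula.realize_subst]
  constructor <;> (intro h; convert h using 1; funext i; fin_cases i <;> simp)

@[simp] lemma realize_substLast {α : Type} (v : α → M) (φ : Larith.Formula (α ⊕ Fin 1))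
    (t : Larith.Term α) :
    (substLast φ t).Realize v ↔ φ.Realize (Sum.elim v fun _ => t.realize v) := by
  simp only [substLast, Formula.Realize, BoundedFormula.realize_subst]
  constructor <;> (intro h; convert h using 1; funext i; cases i <;> simp)

@[simp] lemma realize_isMinOf {α : Type} (v : α → M) (φ : Larith.Formula (α ⊕ Fin 1))
    (t : Larith.Term α) :
    (isMinOf φ t).Realize v ↔
      φ.Realize (Sum.elim v fun _ => t.realize v) ∧
        ∀ a : M, leM (succM a) (t.realize v) → ¬ φ.Realize (Sum.elim v fun _ => a) := by
  simp [isMinOf, Term.realize_relabel]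

end Realize

section PeanoModel

variable {M : Type} [Larith.Structure M]

lemma realize_of_closure_mem_QTheory (hM : M ⊨ PATheory) {k : ℕ} {φ : Larith.Formula (Fin k)}
    (hφ : closure φ ∈ QTheory) (p : Fin k → M) : φ.Realize p :=
  (realize_closure φ).1 (hM.realize_of_mem _ (Set.mem_union_left _ hφ)) p

lemma succM_ne_zeroM (hM : M ⊨ PATheory) (a : M) : succM a ≠ zeroM := by
  have h := realize_of_closure_mem_QTheory hM
    (φ := ∼(Term.equal (succT (Term.var (0 : Fin 1))) (num 0))) (by simp [QTheory])
  simpa [numM] using h fun _ => a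

lemma succM_injective (hM : M ⊨ PATheory) : Function.Injective (succM : M → M) := by
  intro a b hab
  have h := realize_of_closure_mem_QTheory hM
    (φ := (Term.equal (succT (Term.var (0 : Fin 2))) (succT (Term.var 1)) ⟹
      Term.equal (Term.var 0) (Term.var (1 : Fin 2)))) (by simp [QTheory])
  simpa [hab] using h ![a, b]

lemma eq_zeroM_or_exists_eq_succM (hM : M ⊨ PATheory) (a : M) :
    a = zeroM ∨ ∃ b, a = succM b := by
  have h := realize_of_closure_mem_QTheory hM
    (φ := (∼(Term.equal (Term.var (0 : Fin 1)) (num 0)) ⟹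
      ex1 (Term.equal (Term.var (Sum.inl 0)) (succT (Term.var (Sum.inr (0 : Fin 1)))) :
        Larith.Formula (Fin 1 ⊕ Fin 1)))) (by simp [QTheory])
  simpa [numM, or_iff_not_imp_left] using h fun _ => a

lemma addM_zeroM (hM : M ⊨ PATheory) (a : M) : addM a zeroM = a := by
  have h := realize_of_closure_mem_QTheory hM
    (φ := Term.equal (addT (Term.var (0 : Fin 1)) (num 0)) (Term.var 0))
    (by simp [QTheory])
  simpa [numM] using h fun _ => a

lemma addM_succM (hM : M ⊨ PATheory) (a b : M) : addM a (succM b) = succM (addM a b) := by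
  have h := realize_of_closure_mem_QTheory hM
    (φ := Term.equal (addT (Term.var (0 : Fin 2)) (succT (Term.var 1)))
      (succT (addT (Term.var 0) (Term.var (1 : Fin 2))))) (by simp [QTheory])
  simpa using h ![a, b]

lemma leM_iff_exists_addM (hM : M ⊨ PATheory) (a b : M) : leM a b ↔ ∃ c, addM c a = b := by
  have h := realize_of_closure_mem_QTheory hM
    (φ := leF (Term.var (0 : Fin 2)) (Term.var 1) ⇔
      ex1 (Term.equal (addT (Term.var (Sum.inr (0 : Fin 1))) (Term.var (Sum.inl 0)))
        (Term.var (Sum.inl (1 : Fin 2))))) (by simp [QTheory])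
  simpa using h ![a, b]

lemma realize_induction (hM : M ⊨ PATheory) {k : ℕ} (φ : Larith.Formula (Fin k ⊕ Fin 1))
    (p : Fin k → M) (h0 : φ.Realize (Sum.elim p fun _ => zeroM))
    (hs : ∀ a : M, φ.Realize (Sum.elim p fun _ => a) → φ.Realize (Sum.elim p fun _ => succM a))
    (a : M) : φ.Realize (Sum.elim p fun _ => a) := by
  have h := (realize_closure _).1
    (hM.realize_of_mem (inductionSentence φ) (Set.mem_union_right _ ⟨k, φ, rfl⟩)) p
  simp only [Formula.realize_imp, Formula.realize_inf, realize_substLast, realize_all1] at h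
  refine h ⟨by simpa [numM] using h0, fun b hb => ?_⟩ a
  have hstep := hs b hb
  simp only [Formula.Realize, BoundedFormula.realize_subst] at hstep ⊢
  convert hstep using 2
  rename_i i
  cases i <;> simp

lemma zeroM_addM (hM : M ⊨ PATheory) (a : M) : addM zeroM a = a := by
  have h := realize_induction hM
    (Term.equal (addT (num 0) (Term.var (Sum.inr 0))) (Term.var (Sum.inr 0)) :
      Larith.Formula (Fin 0 ⊕ Fin 1)) finZeroElim ?_ ?_ a
  · simpa [numM] using h
  · simp [numM, addM_zeroM hM]
  · intro b hb
    simp only [Formula.realize_equal, realize_addT, realize_num, Term.realize_var,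
      Sum.elim_inr, numM] at hb ⊢
    rw [addM_succM hM, hb]

lemma succM_addM (hM : M ⊨ PATheory) (c a : M) : addM (succM c) a = succM (addM c a) := by
  have h := realize_induction hM
    (Term.equal (addT (succT (Term.var (Sum.inl 0))) (Term.var (Sum.inr 0)))
      (succT (addT (Term.var (Sum.inl (0 : Fin 1))) (Term.var (Sum.inr 0)))))
    (fun _ => c) ?_ ?_ a
  · simpa using h
  · simp [addM_zeroM hM]
  · intro b hb
    simp only [Formula.realize_equal, realize_addT, realize_succT, Term.realize_var,
      Sum.elim_inr, Sum.elim_inl] at hb ⊢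
    rw [addM_succM hM, addM_succM hM, hb]

lemma addM_assoc (hM : M ⊨ PATheory) (x y a : M) :
    addM (addM x y) a = addM x (addM y a) := by
  have h := realize_induction hM
    (Term.equal (addT (addT (Term.var (Sum.inl 0)) (Term.var (Sum.inl 1))) (Term.var (Sum.inr 0)))
      (addT (Term.var (Sum.inl (0 : Fin 2)))
        (addT (Term.var (Sum.inl 1)) (Term.var (Sum.inr 0)))))
    ![x, y] ?_ ?_ a
  · simpa using h
  · simp [addM_zeroM hM]
  · intro b hb
    simp only [Formula.realize_equal, realize_addT, Term.realize_var,
      Sum.elim_inr, Sum.elim_inl] at hb ⊢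
    rw [addM_succM hM, addM_succM hM, addM_succM hM, hb]

lemma leM_refl (hM : M ⊨ PATheory) (a : M) : leM a a :=
  (leM_iff_exists_addM hM a a).2 ⟨zeroM, zeroM_addM hM a⟩

lemma zeroM_leM (hM : M ⊨ PATheory) (a : M) : leM zeroM a :=
  (leM_iff_exists_addM hM _ _).2 ⟨a, addM_zeroM hM a⟩

lemma leM_succM_of_leM (hM : M ⊨ PATheory) {a b : M} (h : leM a b) : leM a (succM b) := by
  obtain ⟨c, rfl⟩ := (leM_iff_exists_addM hM a b).1 h
  exact (leM_iff_exists_addM hM _ _).2 ⟨succM c, succM_addM hM c a⟩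

lemma succM_leM_succM (hM : M ⊨ PATheory) {a b : M} (h : leM a b) :
    leM (succM a) (succM b) := by
  obtain ⟨c, rfl⟩ := (leM_iff_exists_addM hM a b).1 h
  exact (leM_iff_exists_addM hM _ _).2 ⟨c, addM_succM hM c a⟩

lemma leM_of_succM_leM_succM (hM : M ⊨ PATheory) {a b : M} (h : leM (succM a) (succM b)) :
    leM a b := by
  obtain ⟨c, hc⟩ := (leM_iff_exists_addM hM _ _).1 h
  rw [addM_succM hM] at hc
  exact (leM_iff_exists_addM hM _ _).2 ⟨c, succM_injective hM hc⟩

lemma leM_trans (hM : M ⊨ PATheory) {a b c : M} (h₁ : leM a b) (h₂ : leM b c) : leM a c := by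
  obtain ⟨u, rfl⟩ := (leM_iff_exists_addM hM _ _).1 h₁
  obtain ⟨w, rfl⟩ := (leM_iff_exists_addM hM _ _).1 h₂
  exact (leM_iff_exists_addM hM _ _).2 ⟨addM w u, addM_assoc hM w u a⟩

lemma eq_zeroM_of_leM_zeroM (hM : M ⊨ PATheory) {a : M} (h : leM a zeroM) : a = zeroM := by
  obtain ⟨c, hc⟩ := (leM_iff_exists_addM hM _ _).1 h
  obtain h0 | ⟨b, rfl⟩ := eq_zeroM_or_exists_eq_succM hM a
  · exact h0
  · exact absurd (addM_succM hM c b ▸ hc) (succM_ne_zeroM hM _)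

lemma leM_or_eq_of_leM_succM (hM : M ⊨ PATheory) {a b : M} (h : leM a (succM b)) :
    leM a b ∨ a = succM b := by
  obtain ⟨c, hc⟩ := (leM_iff_exists_addM hM _ _).1 h
  obtain rfl | ⟨c, rfl⟩ := eq_zeroM_or_exists_eq_succM hM c
  · exact Or.inr (zeroM_addM hM a ▸ hc)
  · rw [succM_addM hM] at hc
    exact Or.inl ((leM_iff_exists_addM hM _ _).2 ⟨c, succM_injective hM hc⟩)

lemma leM_or_succM_leM (hM : M ⊨ PATheory) (a b : M) : leM a b ∨ leM (succM b) a := by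
  have h := realize_induction hM
    (all1 (leF (Term.var (Sum.inl (Sum.inr (0 : Fin 1)))) (Term.var (Sum.inr 0)) ⊔
      leF (succT (Term.var (Sum.inr 0))) (Term.var (Sum.inl (Sum.inr (0 : Fin 1)))) :
        Larith.Formula ((Fin 0 ⊕ Fin 1) ⊕ Fin 1)))
    finZeroElim ?_ ?_ a
  · simpa using (realize_all1 _ _).1 h b
  · simpa using fun c => Or.inl (zeroM_leM hM c)
  · intro x hx
    simp only [realize_all1, Formula.realize_sup, realize_leF, realize_succT, Term.realize_var,
      Sum.elim_inl, Sum.elim_inr] at hx ⊢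
    intro c
    obtain h | h := hx c
    · obtain ⟨u, rfl⟩ := (leM_iff_exists_addM hM _ _).1 h
      obtain rfl | ⟨u, rfl⟩ := eq_zeroM_or_exists_eq_succM hM u
      · exact Or.inr (by rw [zeroM_addM hM]; exact leM_refl hM _)
      · refine Or.inl ((leM_iff_exists_addM hM _ _).2 ⟨u, ?_⟩)
        rw [addM_succM hM, succM_addM hM]
    · exact Or.inr (leM_succM_of_leM hM h)

lemma exists_eq_numM_of_leM_numM (hM : M ⊨ PATheory) {a : M} {n : ℕ} (h : leM a (numM n)) :
    ∃ i : ℕ, a = numM i := by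
  induction n with
  | zero => exact ⟨0, eq_zeroM_of_leM_zeroM hM h⟩
  | succ n ih =>
    obtain h | h := leM_or_eq_of_leM_succM hM h
    · exact ih h
    · exact ⟨n + 1, h⟩

lemma succM_numM_leM_of_forall_not (hM : M ⊨ PATheory) {P : M → Prop}
    (hP : ∀ i : ℕ, ¬ P (numM i)) {a : M} (ha : P a) (n : ℕ) : leM (succM (numM n)) a := by
  refine (leM_or_succM_leM hM a (numM n)).resolve_left fun h => ?_
  obtain ⟨i, rfl⟩ := exists_eq_numM_of_leM_numM hM h
  exact hP i ha

lemma exists_minimal_of_realize (hM : M ⊨ PATheory) {k : ℕ} (φ : Larith.Formula (Fin k ⊕ Fin 1))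
    (p : Fin k → M) {a : M} (ha : φ.Realize (Sum.elim p fun _ => a)) :
    ∃ z, φ.Realize (Sum.elim p fun _ => z) ∧
      ∀ b, leM (succM b) z → ¬ φ.Realize (Sum.elim p fun _ => b) := by
  by_contra! hdescent
  set noneBelow : Larith.Formula (Fin k ⊕ Fin 1) :=
    all1 (leF (Term.var (Sum.inr 0)) (Term.var (Sum.inl (Sum.inr 0))) ⟹
      ∼(φ.relabel (Sum.elim (Sum.inl ∘ Sum.inl) fun _ => Sum.inr 0)))
  have realize_noneBelow (x : M) : noneBelow.Realize (Sum.elim p fun _ => x) ↔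
      ∀ c, leM c x → ¬ φ.Realize (Sum.elim p fun _ => c) := by
    simp only [noneBelow, realize_all1, Formula.realize_imp, Formula.realize_not, realize_leF,
      Term.realize_var, Formula.realize_relabel, Sum.elim_inl, Sum.elim_inr]
    refine forall_congr' fun c => imp_congr_right fun _ => not_congr (iff_of_eq ?_)
    congr 1
    funext i
    cases i <;> rfl
  have hall := realize_induction hM noneBelow p ?_ ?_ a
  · exact (realize_noneBelow a).1 hall a (leM_refl hM a) ha
  · refine (realize_noneBelow _).2 fun c hc hφ => ?_
    obtain rfl := eq_zeroM_of_leM_zeroM hM hc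
    obtain ⟨b, hb, -⟩ := hdescent _ hφ
    exact succM_ne_zeroM hM b (eq_zeroM_of_leM_zeroM hM hb)
  · intro x hx
    rw [realize_noneBelow] at hx ⊢
    intro c hc hφ
    obtain hc | rfl := leM_or_eq_of_leM_succM hM hc
    · exact hx c hc hφ
    · obtain ⟨b, hb, hφb⟩ := hdescent _ hφ
      exact hx b (leM_of_succM_leM_succM hM hb) hφb

end PeanoModel

section MinimalProofs

variable {M : Type} [Larith.Structure M]

def IsMinProofM (pf : Larith.Formula (Fin 2)) (a m : M) : Prop :=
  pf.Realize ![a, m] ∧ ∀ b, leM (succM b) a → ¬ pf.Realize ![b, m]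

@[simp] lemma realize_minProofOf {α : Type} (v : α → M) (pf : Larith.Formula (Fin 2))
    (c t : Larith.Term α) :
    (minProofOf pf c t).Realize v ↔ IsMinProofM pf (t.realize v) (c.realize v) := by
  simp [minProofOf, IsMinProofM, Term.realize_relabel]

lemma realize_extFormulaAt {α : Type} (v : α → M) (pf : Larith.Formula (Fin 2)) (c : ℕ)
    (t : Larith.Term α) :
    (extFormulaAt pf c t).Realize v ↔
      ∀ x y : M, pf.Realize ![x, t.realize v] → IsMinProofM pf y (numM c) → leM y x := by
  simp [extFormulaAt, Formula.realize_iAlls, Fin.forall_fin_succ_pi, Term.realize_relabel]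

lemma realize_remoteAt {α : Type} (v : α → M) (pf dgn : Larith.Formula (Fin 2))
    (t : Larith.Term α) :
    (remoteAt pf dgn t).Realize v ↔
      ∃ x k z : M, dgn.Realize ![x, t.realize v] ∧ IsMinProofM pf k (t.realize v) ∧
        IsMinProofM pf z x ∧ leM (succM z) k := by
  simp [remoteAt, Formula.realize_iExs, Fin.exists_fin_succ_pi, Fin.exists_fin_zero_pi,
    Term.realize_relabel, and_assoc]
  rfl

lemma exists_isMinProofM_le (hM : M ⊨ PATheory) {pf : Larith.Formula (Fin 2)} {a m : M}
    (ha : pf.Realize ![a, m]) : ∃ z, leM z a ∧ IsMinProofM pf z m := by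
  obtain ⟨z, hz, hmin⟩ := exists_minimal_of_realize hM
    (app2 pf (Term.var (Sum.inr 0)) (Term.var (Sum.inl (0 : Fin 1)))) (fun _ => m) (a := a)
    (by simpa using ha)
  simp only [realize_app2, Term.realize_var, Sum.elim_inl, Sum.elim_inr] at hz hmin
  exact ⟨z, (leM_or_succM_leM hM z a).resolve_right fun h => hmin a h ha, hz, hmin⟩

lemma exists_isMinProofM_lt_of_standard_proof (hM : M ⊨ PATheory)
    {pf : Larith.Formula (Fin 2)} {m m' a : M} {n : ℕ}
    (hnonstd : ∀ i : ℕ, ¬ pf.Realize ![numM i, m]) (ha : pf.Realize ![a, m])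
    (hn : pf.Realize ![numM n, m']) :
    ∃ k z, IsMinProofM pf k m ∧ IsMinProofM pf z m' ∧ leM (succM z) k := by
  obtain ⟨k, -, hk⟩ := exists_isMinProofM_le hM ha
  obtain ⟨z, hzn, hz⟩ := exists_isMinProofM_le hM hn
  exact ⟨k, z, hk, hz, leM_trans hM (succM_leM_succM hM hzn)
    (succM_numM_leM_of_forall_not hM (P := fun x => pf.Realize ![x, m]) hnonstd hk.1 n)⟩

lemma exists_isMinProofM_lt_of_not_realize_extFormula (hM : M ⊨ PATheory)
    {pf : Larith.Formula (Fin 2)} {c : ℕ} {m' : M}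
    (h : ¬ (extFormula pf c).Realize fun _ => m') :
    ∃ k z, IsMinProofM pf k (numM c) ∧ IsMinProofM pf z m' ∧ leM (succM z) k := by
  simp only [extFormula, realize_extFormulaAt, Term.realize_var, not_forall] at h
  obtain ⟨x, k, hx, hk, hkx⟩ := h
  obtain ⟨z, hzx, hz⟩ := exists_isMinProofM_le hM hx
  exact ⟨k, z, hk, hz,
    leM_trans hM (succM_leM_succM hM hzx) ((leM_or_succM_leM hM k x).resolve_left hkx)⟩

end MinimalProofs

lemma Proves.realize {T : Larith.Theory} {φ : Larith.Sentence} (h : Proves T φ)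
    (M : Theory.ModelType.{0, 0, 0} T) : M ⊨ φ :=
  Theory.models_sentence_iff.1 h M

lemma Consistent.not_proves_of_proves_not {T : Larith.Theory} (hT : Consistent T)
    {φ : Larith.Sentence} (h : Proves T (∼φ)) : ¬ Proves T φ := fun h' =>
  hT (Theory.models_sentence_iff.2 fun M =>
    absurd (h'.realize M) ((Sentence.realize_not M).1 (h.realize M)))

lemma GodelSetting.proves_not_proofF_num {T : Larith.Theory} (G : GodelSetting T)
    (hT : Consistent T) {s : Larith.Sentence} (hs : Proves T (∼s)) (n : ℕ) :
    Proves T (∼(app2 G.ProofF (num n) (num (G.code s)))) :=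
  (G.proof_decide n _).resolve_left fun h => hT.not_proves_of_proves_not hs (G.proof_sound s n h)

/-- **Lemma II.** For any standard sentence `s` in the language of
`T`: if `T ⊢ ¬s` and `T ⊢ ∃n Proof_T(n, ⁰⌜s⌝)`, then `T ⊢ remote(⁰⌜s⌝)`. -/
theorem statement_4 (T : Larith.Theory) (hPA : PATheory ⊆ T) (hcon : Consistent T)
    (hcomp : Complete T) (G : GodelSetting T) (hdgn : DgnRepresents T G)
    (s : Larith.Sentence)
    (hrefute : Proves T (∼s))
    (hproof : Proves T (ex1 (app2 G.ProofF (Term.var (Sum.inr 0)) (num (G.code s))))) :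
    Proves T (remoteAt G.ProofF G.DgnF (num (G.code s))) := by
  set d := G.diag (extFormula G.ProofF (G.code s))
  refine Theory.models_sentence_iff.2 fun M => ?_
  have hM : M ⊨ PATheory := M.is_model.mono hPA
  have hmin : ∃ k z : M, IsMinProofM G.ProofF k (numM (G.code s)) ∧
      IsMinProofM G.ProofF z (numM (G.code d)) ∧ leM (succM z) k := by
    rcases hcomp d with hd | hnd
    · obtain ⟨n, hn⟩ := G.proof_complete d hd
      obtain ⟨a, ha⟩ := by simpa [Sentence.Realize] using hproof.realize M
      refine exists_isMinProofM_lt_of_standard_proof hM (n := n) (fun i => ?_) ha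
        (by simpa [Sentence.Realize] using hn.realize M)
      simpa [Sentence.Realize] using (G.proves_not_proofF_num hcon hrefute i).realize M
    · refine exists_isMinProofM_lt_of_not_realize_extFormula hM fun hext => ?_
      have hdiag := (G.diag_spec (extFormula G.ProofF (G.code s))).realize M
      simp only [Sentence.Realize, Formula.realize_iff, realize_app1, realize_num] at hdiag
      exact (Sentence.realize_not M).1 (hnd.realize M) (hdiag.2 hext)
  obtain ⟨k, z, hk, hz, hzk⟩ := hmin
  have hdgnM := (hdgn.1 s).realize M
  simp only [Sentence.Realize, realize_app2, realize_num] at hdgnM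
  simpa [Sentence.Realize, realize_remoteAt] using ⟨_, hdgnM, k, hk, z, hz, hzk⟩

end GodelStalk
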